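/- Let φ(x) := ψ(x) + 1/(2x) - log x, where ψ = Γ'/Γ is the digamma function. Then for every real α > 0, √α · ( (γ - log(2πα))/(2α) + Σ_{n=1}^∞ φ(nα) ) = ∫_0^∞ ( √α/(t(e^{2πt} - 1)) - 2π/(√α (e^{2πt/α} - 1)(e^{2πt} - 1)) - e^{-t/α}/(2t√α) ) dt. -/

import Mathlib

open Real MeasureTheory Filter

/-- The digamma function `ψ = Γ'/Γ`. -/
noncomputable def digamma (x : ℝ) : ℝ := deriv Real.Gamma x / Real.Gamma x

/-- `φ(x) := ψ(x) + 1/(2x) - log x`. -/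
noncomputable def phi (x : ℝ) : ℝ := digamma x + 1 / (2 * x) - Real.log x

/-!
Binet's formula `φ(x) = -∫₀^∞ e^{-xt} (1/(e^t - 1) - 1/t + 1/2) dt`: both sides change by the same
amount under `x ↦ x + 1` (by `ψ(x + 1) = ψ(x) + 1/x`, resp. Frullani's integral), and both tend
to `0` as `x → ∞` (by log-convexity of `Γ`, resp. because the kernel lies in `[0, 1/2]`).
Summing over `x = α, 2α, 3α, …` with `∑ e^{-nαt} = 1/(e^{αt} - 1)` turns the series into one
integral. At `x = 1` Binet's formula gives `γ = ∫₀^∞ (1/(e^t - 1) - e^{-t}/t) dt`, which together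
with Frullani's integral evaluates the remaining terms; the substitution `t ↦ 2πt/α` then matches
everything with the integrand on the right.
-/

open Set Topology

lemma exp_sub_one_pos {t : ℝ} (ht : 0 < t) : 0 < exp t - 1 := by
  linarith [add_one_lt_exp ht.ne']

noncomputable def binetKernel (t : ℝ) : ℝ := 1 / (exp t - 1) - 1 / t + 1 / 2

lemma continuousOn_binetKernel : ContinuousOn binetKernel (Ioi 0) :=
  ((continuousOn_const.div (by fun_prop) fun _ ht => (exp_sub_one_pos ht).ne').sub
    (continuousOn_const.div continuousOn_id fun _ ht => ne_of_gt ht)).add continuousOn_const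

lemma sub_two_mul_exp_add_add_two_nonneg {t : ℝ} (ht : 0 ≤ t) : 0 ≤ (t - 2) * exp t + t + 2 := by
  let u : ℝ → ℝ := fun x => (x - 2) * exp x + x + 2
  have hu : ∀ x, HasDerivAt u ((x - 1) * exp x + 1) x := fun x => by
    refine ((((hasDerivAt_id x).sub_const 2).mul (hasDerivAt_exp x)).add
      (hasDerivAt_id x)).add_const 2 |>.congr_deriv ?_
    simp only [id]
    ring
  -- `(1 - x) e^x ≤ 1` is `1 - x ≤ e^{-x}`
  have hu' : ∀ x, 0 ≤ (x - 1) * exp x + 1 := fun x => by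
    have h := mul_le_mul_of_nonneg_right (add_one_le_exp (-x)) (exp_pos x).le
    rw [← exp_add, neg_add_cancel, exp_zero] at h
    linarith
  have hmono : Monotone u :=
    monotone_of_deriv_nonneg (fun x => (hu x).differentiableAt) fun x => (hu x).deriv ▸ hu' x
  simpa [u] using hmono ht

lemma binetKernel_eq_div {t : ℝ} (ht : 0 < t) :
    binetKernel t = ((t - 2) * exp t + t + 2) / (2 * t * (exp t - 1)) := by
  have := (exp_sub_one_pos ht).ne'
  unfold binetKernel
  field_simp
  ring

lemma binetKernel_nonneg {t : ℝ} (ht : 0 < t) : 0 ≤ binetKernel t := by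
  rw [binetKernel_eq_div ht]
  have := exp_sub_one_pos ht
  exact div_nonneg (sub_two_mul_exp_add_add_two_nonneg ht.le) (by positivity)

lemma binetKernel_le_half {t : ℝ} (ht : 0 < t) : binetKernel t ≤ 1 / 2 := by
  have : 1 / (exp t - 1) ≤ 1 / t := one_div_le_one_div_of_le ht (by linarith [add_one_le_exp t])
  unfold binetKernel
  linarith

lemma binetKernel_le_div_four {t : ℝ} (ht : 0 < t) : binetKernel t ≤ t / 4 := by
  have hE := exp_sub_one_pos ht
  have hcubic : t + t ^ 2 / 2 + t ^ 3 / 6 ≤ exp t - 1 := by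
    have h := sum_le_exp_of_nonneg ht.le 4
    norm_num [Finset.sum_range_succ, Nat.factorial] at h
    linarith
  rw [binetKernel_eq_div ht, div_le_iff₀ (by positivity)]
  nlinarith [mul_le_mul_of_nonneg_left hcubic (by nlinarith [sq_nonneg (t - 1)] :
    (0 : ℝ) ≤ t ^ 2 - 2 * t + 4), pow_pos ht 3, pow_pos ht 4, pow_pos ht 5]

lemma integral_exp_neg_mul {c : ℝ} (hc : 0 < c) : ∫ t in Ioi 0, exp (-(c * t)) = 1 / c := by
  simpa [neg_mul, div_neg, neg_div] using integral_exp_mul_Ioi (neg_neg_of_pos hc) 0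

lemma integrableOn_exp_neg_mul {c : ℝ} (hc : 0 < c) :
    IntegrableOn (fun t => exp (-(c * t))) (Ioi 0) := by
  simpa [neg_mul] using exp_neg_integrableOn_Ioi 0 hc

lemma integrableOn_exp_neg_mul_sub_exp_neg_mul_div {a b : ℝ} (ha : 0 < a) (hb : 0 < b) :
    IntegrableOn (fun t => (exp (-(a * t)) - exp (-(b * t))) / t) (Ioi 0) := by
  wlog hab : a ≤ b generalizing a b
  · refine (this hb ha (le_of_not_ge hab)).neg.congr (ae_of_all _ fun t => ?_)
    simp only [Pi.neg_apply]
    ring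
  refine ((integrableOn_exp_neg_mul ha).const_mul (b - a)).mono'
    ((ContinuousOn.div (by fun_prop) continuousOn_id fun _ ht => ne_of_gt ht).aestronglyMeasurable
      measurableSet_Ioi) ((ae_restrict_iff' measurableSet_Ioi).2 (ae_of_all _ fun t ht => ?_))
  have ht : 0 < t := ht
  have hsplit : exp (-(b * t)) = exp (-(a * t)) * exp (-((b - a) * t)) := by
    rw [← exp_add]; ring_nf
  have hlin := add_one_le_exp (-((b - a) * t))
  have hmono : exp (-(b * t)) ≤ exp (-(a * t)) := exp_le_exp.2 (by nlinarith)
  rw [norm_div, Real.norm_of_nonneg (sub_nonneg.2 hmono), Real.norm_of_nonneg ht.le,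
    div_le_iff₀ ht, hsplit]
  nlinarith [exp_pos (-(a * t))]

lemma integral_exp_neg_mul_sub_exp_neg_mul_div {a b : ℝ} (ha : 0 < a) (hb : 0 < b) :
    ∫ t in Ioi 0, (exp (-(a * t)) - exp (-(b * t))) / t = log (b / a) := by
  have hcont : Continuous fun x : ℝ => exp (-x) := by fun_prop
  have hL : Tendsto (fun x : ℝ => exp (-x)) (𝓝[>] 0) (𝓝 1) := by
    simpa using hcont.continuousAt.tendsto.mono_left (nhdsWithin_le_nhds (a := (0 : ℝ)))
  have h := Frullani.integral_Ioi_eq (hcont.locallyIntegrable.locallyIntegrableOn _)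
    ha hb hL tendsto_exp_neg_atTop_nhds_zero ?_
  · simpa [div_eq_inv_mul] using h
  · simpa [div_eq_inv_mul] using integrableOn_exp_neg_mul_sub_exp_neg_mul_div ha hb

noncomputable def binetIntegral (x : ℝ) : ℝ := ∫ t in Ioi 0, exp (-(x * t)) * binetKernel t

lemma integrableOn_exp_neg_mul_binetKernel {x : ℝ} (hx : 0 < x) :
    IntegrableOn (fun t => exp (-(x * t)) * binetKernel t) (Ioi 0) := by
  refine ((integrableOn_exp_neg_mul hx).mul_const (1 / 2)).mono'
    (((by fun_prop : Continuous fun t => exp (-(x * t))).continuousOn.mul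
      continuousOn_binetKernel).aestronglyMeasurable measurableSet_Ioi)
    ((ae_restrict_iff' measurableSet_Ioi).2 (ae_of_all _ fun t ht => ?_))
  rw [norm_mul, Real.norm_of_nonneg (exp_pos _).le, Real.norm_of_nonneg (binetKernel_nonneg ht)]
  exact mul_le_mul_of_nonneg_left (binetKernel_le_half ht) (exp_pos _).le

lemma binetIntegral_nonneg (x : ℝ) : 0 ≤ binetIntegral x :=
  setIntegral_nonneg measurableSet_Ioi fun _ ht => mul_nonneg (exp_pos _).le (binetKernel_nonneg ht)

lemma binetIntegral_le {x : ℝ} (hx : 0 < x) : binetIntegral x ≤ 1 / (2 * x) := by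
  calc binetIntegral x ≤ ∫ t in Ioi 0, exp (-(x * t)) * (1 / 2) :=
        setIntegral_mono_on (integrableOn_exp_neg_mul_binetKernel hx)
          ((integrableOn_exp_neg_mul hx).mul_const _) measurableSet_Ioi fun t ht =>
          mul_le_mul_of_nonneg_left (binetKernel_le_half ht) (exp_pos _).le
    _ = 1 / (2 * x) := by
        rw [integral_mul_const, integral_exp_neg_mul hx]
        ring

lemma tendsto_binetIntegral_atTop : Tendsto binetIntegral atTop (𝓝 0) := by
  refine squeeze_zero' (Eventually.of_forall binetIntegral_nonneg)
    ((eventually_gt_atTop 0).mono fun x hx => binetIntegral_le hx) ?_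
  exact tendsto_const_nhds.div_atTop (tendsto_id.const_mul_atTop two_pos)

lemma binetIntegral_sub_binetIntegral_add_one {x : ℝ} (hx : 0 < x) :
    binetIntegral x - binetIntegral (x + 1)
      = 1 / (2 * x) + 1 / (2 * (x + 1)) - log ((x + 1) / x) := by
  have hx1 : 0 < x + 1 := by linarith
  have hE := integrableOn_exp_neg_mul hx
  have hE1 := integrableOn_exp_neg_mul hx1
  have hF := integrableOn_exp_neg_mul_sub_exp_neg_mul_div hx hx1
  have hpointwise : ∀ t ∈ Ioi (0 : ℝ),
      exp (-(x * t)) * binetKernel t - exp (-((x + 1) * t)) * binetKernel t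
        = exp (-((x + 1) * t)) - (exp (-(x * t)) - exp (-((x + 1) * t))) / t
          + (exp (-(x * t)) - exp (-((x + 1) * t))) * (1 / 2) := fun t ht => by
    have := (exp_sub_one_pos ht).ne'
    have hsplit : exp (-(x * t)) = exp (-((x + 1) * t)) * exp t := by
      rw [← exp_add]; ring_nf
    rw [binetKernel, hsplit]
    field_simp
  rw [binetIntegral, binetIntegral, ← integral_sub (integrableOn_exp_neg_mul_binetKernel hx)
    (integrableOn_exp_neg_mul_binetKernel hx1), setIntegral_congr_fun measurableSet_Ioi hpointwise,
    integral_add, integral_sub hE1 hF, integral_mul_const, integral_sub hE hE1,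
    integral_exp_neg_mul hx, integral_exp_neg_mul hx1,
    integral_exp_neg_mul_sub_exp_neg_mul_div hx hx1]
  · field_simp
    ring
  · exact hE1.sub hF
  · exact (hE.sub hE1).mul_const _

lemma differentiableAt_Gamma_of_pos {x : ℝ} (hx : 0 < x) : DifferentiableAt ℝ Gamma x :=
  differentiableAt_Gamma fun m h => by linarith [h ▸ hx, (Nat.cast_nonneg m : (0 : ℝ) ≤ m)]

lemma deriv_Gamma_add_one_of_pos {x : ℝ} (hx : 0 < x) :
    deriv Gamma (x + 1) = Gamma x + x * deriv Gamma x := by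
  have hshift : HasDerivAt (fun y => Gamma (y + 1)) (deriv Gamma (x + 1)) x := by
    simpa using (differentiableAt_Gamma_of_pos (by linarith)).hasDerivAt.comp_add_const x 1
  have hprod := (hasDerivAt_id x).mul (differentiableAt_Gamma_of_pos hx).hasDerivAt
  have heq : (fun y => Gamma (y + 1)) =ᶠ[𝓝 x] fun y => id y * Gamma y :=
    (eventually_gt_nhds hx).mono fun y hy => Gamma_add_one hy.ne'
  rw [← hshift.deriv, heq.deriv_eq]
  exact hprod.deriv.trans (by simp)

lemma digamma_add_one {x : ℝ} (hx : 0 < x) : digamma (x + 1) = digamma x + 1 / x := by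
  have := (Gamma_pos_of_pos hx).ne'
  rw [digamma, digamma, deriv_Gamma_add_one_of_pos hx, Gamma_add_one hx.ne']
  field_simp
  ring

lemma phi_add_one_sub_phi {x : ℝ} (hx : 0 < x) :
    phi (x + 1) - phi x = 1 / (2 * x) + 1 / (2 * (x + 1)) - log ((x + 1) / x) := by
  rw [phi, phi, digamma_add_one hx, log_div (by linarith) hx.ne']
  field_simp
  ring

lemma hasDerivAt_log_Gamma {x : ℝ} (hx : 0 < x) : HasDerivAt (log ∘ Gamma) (digamma x) x :=
  ((hasDerivAt_log (Gamma_pos_of_pos hx).ne').comp x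
    (differentiableAt_Gamma_of_pos hx).hasDerivAt).congr_deriv (by rw [digamma, div_eq_inv_mul])

lemma log_Gamma_add_one {x : ℝ} (hx : 0 < x) :
    (log ∘ Gamma) (x + 1) = (log ∘ Gamma) x + log x := by
  simp only [Function.comp_apply, Gamma_add_one hx.ne', log_mul hx.ne' (Gamma_pos_of_pos hx).ne']
  ring

-- The slopes of the convex function `log Γ` on `[x - 1, x]` and `[x, x + 1]` are `log (x - 1)`
-- and `log x`.
lemma digamma_le_log {x : ℝ} (hx : 0 < x) : digamma x ≤ log x := by
  have h := convexOn_log_Gamma.deriv_le_slope (mem_Ioi.2 hx) (mem_Ioi.2 (by linarith))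
    (lt_add_one x) (hasDerivAt_log_Gamma hx).differentiableAt
  rwa [(hasDerivAt_log_Gamma hx).deriv, slope_def_field, log_Gamma_add_one hx, add_sub_cancel_left,
    add_sub_cancel_left, div_one] at h

lemma log_sub_one_le_digamma {x : ℝ} (hx : 1 < x) : log (x - 1) ≤ digamma x := by
  have hx0 : 0 < x := by linarith
  have h := convexOn_log_Gamma.slope_le_deriv (mem_Ioi.2 (sub_pos.2 hx)) (mem_Ioi.2 hx0)
    (sub_one_lt x) (hasDerivAt_log_Gamma hx0).differentiableAt
  have hrec := log_Gamma_add_one (sub_pos.2 hx)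
  rw [sub_add_cancel] at hrec
  rwa [(hasDerivAt_log_Gamma hx0).deriv, slope_def_field, hrec, add_sub_cancel_left,
    sub_sub_cancel, div_one] at h

lemma tendsto_phi_atTop : Tendsto phi atTop (𝓝 0) := by
  have hupper : Tendsto (fun x : ℝ => 1 / (2 * x)) atTop (𝓝 0) :=
    tendsto_const_nhds.div_atTop (tendsto_id.const_mul_atTop two_pos)
  have hlower : Tendsto (fun x : ℝ => log (1 - x⁻¹)) atTop (𝓝 0) := by
    simpa using (tendsto_const_nhds.sub tendsto_inv_atTop_zero).log (by norm_num : (1 : ℝ) - 0 ≠ 0)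
  refine tendsto_of_tendsto_of_tendsto_of_le_of_le' hlower hupper ?_ ?_
  · filter_upwards [eventually_gt_atTop 1] with x hx
    have hx0 : 0 < x := by linarith
    have : log (1 - x⁻¹) = log (x - 1) - log x := by
      rw [← log_div (by linarith) hx0.ne', sub_div, div_self hx0.ne', one_div]
    rw [this, phi]
    linarith [log_sub_one_le_digamma hx, (by positivity : 0 < 1 / (2 * x))]
  · filter_upwards [eventually_gt_atTop 0] with x hx
    rw [phi]
    linarith [digamma_le_log hx]

theorem phi_eq_neg_binetIntegral {x : ℝ} (hx : 0 < x) : phi x = -binetIntegral x := by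
  have hshift : ∀ n : ℕ, phi (x + n) + binetIntegral (x + n) = phi x + binetIntegral x := by
    intro n
    induction n with
    | zero => simp
    | succ n ih =>
      have hxn : 0 < x + n := by positivity
      rw [Nat.cast_succ, ← add_assoc, ← ih]
      linarith [phi_add_one_sub_phi hxn, binetIntegral_sub_binetIntegral_add_one hxn]
  have hlim : Tendsto (fun n : ℕ => phi (x + n) + binetIntegral (x + n)) atTop (𝓝 0) := by
    have hx_n : Tendsto (fun n : ℕ => x + n) atTop atTop :=
      tendsto_atTop_add_const_left _ x tendsto_natCast_atTop_atTop
    simpa using (tendsto_phi_atTop.comp hx_n).add (tendsto_binetIntegral_atTop.comp hx_n)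
  simp only [hshift] at hlim
  linarith [tendsto_nhds_unique hlim tendsto_const_nhds]

lemma eulerMascheroniConstant_eq_binetIntegral_one :
    eulerMascheroniConstant = binetIntegral 1 + 1 / 2 := by
  have h := phi_eq_neg_binetIntegral one_pos
  rw [phi, digamma, Gamma_one, div_one, ← neg_neg (deriv Gamma 1),
    ← eulerMascheroniConstant_eq_neg_deriv, log_one] at h
  linarith

lemma inv_exp_sub_one_sub_exp_neg_div_eq {t : ℝ} (ht : 0 < t) :
    1 / (exp t - 1) - exp (-t) / t = exp (-(1 * t)) * binetKernel t + exp (-(1 * t)) * (1 / 2) := by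
  have := (exp_sub_one_pos ht).ne'
  rw [binetKernel, one_mul, exp_neg]
  field_simp
  ring

lemma integrableOn_inv_exp_sub_one_sub_exp_neg_div :
    IntegrableOn (fun t => 1 / (exp t - 1) - exp (-t) / t) (Ioi 0) :=
  ((integrableOn_exp_neg_mul_binetKernel one_pos).add
    ((integrableOn_exp_neg_mul one_pos).mul_const _)).congr_fun
    (fun _ ht => (inv_exp_sub_one_sub_exp_neg_div_eq ht).symm) measurableSet_Ioi

lemma eulerMascheroniConstant_eq_integral :
    eulerMascheroniConstant = ∫ t in Ioi 0, (1 / (exp t - 1) - exp (-t) / t) := by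
  rw [setIntegral_congr_fun measurableSet_Ioi fun _ ht => inv_exp_sub_one_sub_exp_neg_div_eq ht,
    integral_add (integrableOn_exp_neg_mul_binetKernel one_pos)
      ((integrableOn_exp_neg_mul one_pos).mul_const _),
    integral_mul_const, integral_exp_neg_mul one_pos, eulerMascheroniConstant_eq_binetIntegral_one,
    binetIntegral]
  ring

lemma div_exp_mul_sub_one_sub_exp_neg_mul_div_eq {c d t : ℝ} (hd : 0 < d) (ht : 0 < t) :
    d / (exp (d * t) - 1) - exp (-(c * t)) / t
      = d * (1 / (exp (d * t) - 1) - exp (-(d * t)) / (d * t))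
        + (exp (-(d * t)) - exp (-(c * t))) / t := by
  field_simp
  ring

lemma integrableOn_inv_exp_mul_sub_one_sub_exp_neg_mul_div {d : ℝ} (hd : 0 < d) :
    IntegrableOn (fun t => 1 / (exp (d * t) - 1) - exp (-(d * t)) / (d * t)) (Ioi 0) := by
  refine (integrableOn_Ioi_comp_mul_left_iff (fun u => 1 / (exp u - 1) - exp (-u) / u) 0 hd).2 ?_
  simpa using integrableOn_inv_exp_sub_one_sub_exp_neg_div

lemma integrableOn_div_exp_mul_sub_one_sub_exp_neg_mul_div {c d : ℝ} (hc : 0 < c) (hd : 0 < d) :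
    IntegrableOn (fun t => d / (exp (d * t) - 1) - exp (-(c * t)) / t) (Ioi 0) :=
  IntegrableOn.congr_fun
    (((integrableOn_inv_exp_mul_sub_one_sub_exp_neg_mul_div hd).const_mul d).add
      (integrableOn_exp_neg_mul_sub_exp_neg_mul_div hd hc))
    (fun _ ht => (div_exp_mul_sub_one_sub_exp_neg_mul_div_eq hd ht).symm) measurableSet_Ioi

lemma integral_div_exp_mul_sub_one_sub_exp_neg_mul_div {c d : ℝ} (hc : 0 < c) (hd : 0 < d) :
    ∫ t in Ioi 0, (d / (exp (d * t) - 1) - exp (-(c * t)) / t)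
      = eulerMascheroniConstant + log (c / d) := by
  rw [setIntegral_congr_fun measurableSet_Ioi fun _ ht =>
      div_exp_mul_sub_one_sub_exp_neg_mul_div_eq hd ht,
    integral_add ((integrableOn_inv_exp_mul_sub_one_sub_exp_neg_mul_div hd).const_mul d)
      (integrableOn_exp_neg_mul_sub_exp_neg_mul_div hd hc),
    integral_const_mul, integral_comp_mul_left_Ioi (fun u => 1 / (exp u - 1) - exp (-u) / u) 0 hd,
    integral_exp_neg_mul_sub_exp_neg_mul_div hd hc, mul_zero, smul_eq_mul,
    mul_inv_cancel_left₀ hd.ne', ← eulerMascheroniConstant_eq_integral]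

lemma hasSum_exp_neg_succ_mul {x : ℝ} (hx : 0 < x) :
    HasSum (fun n : ℕ => exp (-((n + 1) * x))) (1 / (exp x - 1)) := by
  have hr : exp (-x) < 1 := exp_lt_one_iff.2 (neg_neg_of_pos hx)
  have hpow : (fun n : ℕ => exp (-((n + 1) * x))) = fun n => exp (-x) ^ n * exp (-x) := by
    ext n
    rw [← exp_nat_mul, ← exp_add]
    ring_nf
  have hval : 1 / (exp x - 1) = (1 - exp (-x))⁻¹ * exp (-x) := by
    have := (exp_sub_one_pos hx).ne'
    rw [exp_neg]
    field_simp
  rw [hpow, hval]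
  exact (hasSum_geometric_of_lt_one (exp_pos (-x)).le hr).mul_right (exp (-x))

lemma hasSum_integral_exp_neg_succ_mul {g : ℝ → ℝ} {α : ℝ} (hα : 0 < α)
    (hg : ContinuousOn g (Ioi 0)) (hint : IntegrableOn (fun t => g t / (exp (α * t) - 1)) (Ioi 0)) :
    HasSum (fun n : ℕ => ∫ t in Ioi 0, exp (-((n + 1) * α * t)) * g t)
      (∫ t in Ioi 0, g t / (exp (α * t) - 1)) := by
  have hsum : ∀ t ∈ Ioi (0 : ℝ), ∀ y : ℝ, HasSum (fun n : ℕ => exp (-((n + 1) * α * t)) * y)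
      (y / (exp (α * t) - 1)) := fun t ht y => by
    simpa only [mul_assoc, one_div_mul_eq_div] using
      (hasSum_exp_neg_succ_mul (mul_pos hα ht)).mul_right y
  have hsum_abs : ∀ t ∈ Ioi (0 : ℝ), HasSum (fun n : ℕ => ‖exp (-((n + 1) * α * t)) * g t‖)
      ‖g t / (exp (α * t) - 1)‖ := fun t ht => by
    simpa only [norm_mul, norm_div, Real.norm_of_nonneg (exp_pos _).le,
      Real.norm_of_nonneg (exp_sub_one_pos (mul_pos hα ht)).le] using hsum t ht ‖g t‖
  refine hasSum_integral_of_dominated_convergence (fun n t => ‖exp (-((n + 1) * α * t)) * g t‖)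
    (fun n => ((by fun_prop : Continuous fun t => exp (-((n + 1) * α * t))).continuousOn.mul
      hg).aestronglyMeasurable measurableSet_Ioi)
    (fun n => ae_of_all _ fun t => le_rfl)
    ((ae_restrict_iff' measurableSet_Ioi).2 (ae_of_all _ fun t ht => (hsum_abs t ht).summable))
    (IntegrableOn.congr_fun hint.norm (fun t ht => (hsum_abs t ht).tsum_eq.symm) measurableSet_Ioi)
    ((ae_restrict_iff' measurableSet_Ioi).2 (ae_of_all _ fun t ht => hsum t ht (g t)))

-- Near `0` the bound `binetKernel t ≤ t / 4` cancels the pole of `1 / (e^{αt} - 1)`.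
lemma binetKernel_div_exp_mul_sub_one_le {α t : ℝ} (hα : 0 < α) (ht : 0 < t) :
    binetKernel t / (exp (α * t) - 1) ≤ (1 / 2 + 1 / (4 * α)) * exp (-(α * t)) := by
  have hαt : 0 < α * t := mul_pos hα ht
  have hE := exp_sub_one_pos hαt
  have hquot : binetKernel t / (exp (α * t) - 1) ≤ 1 / (4 * α) := by
    rw [div_le_iff₀ hE, div_mul_eq_mul_div, le_div_iff₀ (by positivity)]
    nlinarith [binetKernel_le_div_four ht, add_one_le_exp (α * t)]
  have hsplit : binetKernel t / (exp (α * t) - 1)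
      = exp (-(α * t)) * (binetKernel t + binetKernel t / (exp (α * t) - 1)) := by
    rw [exp_neg]
    field_simp
    ring
  rw [hsplit, mul_comm]
  exact mul_le_mul_of_nonneg_right (add_le_add (binetKernel_le_half ht) hquot) (exp_pos _).le

lemma integrableOn_binetKernel_div_exp_mul_sub_one {α : ℝ} (hα : 0 < α) :
    IntegrableOn (fun t => binetKernel t / (exp (α * t) - 1)) (Ioi 0) := by
  refine ((integrableOn_exp_neg_mul hα).const_mul (1 / 2 + 1 / (4 * α))).mono'
    ((continuousOn_binetKernel.div (by fun_prop) fun t ht =>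
      (exp_sub_one_pos (mul_pos hα ht)).ne').aestronglyMeasurable measurableSet_Ioi)
    ((ae_restrict_iff' measurableSet_Ioi).2 (ae_of_all _ fun t ht => ?_))
  rw [Real.norm_of_nonneg (div_nonneg (binetKernel_nonneg ht) (exp_sub_one_pos (mul_pos hα ht)).le)]
  exact binetKernel_div_exp_mul_sub_one_le hα ht

lemma hasSum_phi_mul {α : ℝ} (hα : 0 < α) :
    HasSum (fun n : ℕ => phi ((n + 1) * α))
      (-∫ t in Ioi 0, binetKernel t / (exp (α * t) - 1)) := by
  simp only [phi_eq_neg_binetIntegral (by positivity : 0 < ((_ : ℕ) + 1 : ℝ) * α)]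
  exact (hasSum_integral_exp_neg_succ_mul hα continuousOn_binetKernel
    (integrableOn_binetKernel_div_exp_mul_sub_one hα)).neg

theorem sqrt_alpha_sum_eq_integral (α : ℝ) (hα : 0 < α) :
    Real.sqrt α * ((Real.eulerMascheroniConstant - Real.log (2 * π * α)) / (2 * α)
        + ∑' n : ℕ, phi ((n + 1) * α))
      = ∫ t in Set.Ioi (0 : ℝ),
          (Real.sqrt α / (t * (Real.exp (2 * π * t) - 1))
            - 2 * π / (Real.sqrt α * (Real.exp (2 * π * t / α) - 1) *
                (Real.exp (2 * π * t) - 1))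
            - Real.exp (-(t / α)) / (2 * t * Real.sqrt α)) := by
  obtain ⟨s, hs, rfl⟩ : ∃ s, 0 < s ∧ s ^ 2 = α := ⟨√α, sqrt_pos.2 hα, sq_sqrt hα.le⟩
  have hc : 0 < 2 * π / s ^ 2 := by positivity
  let g t := binetKernel t / (exp (s ^ 2 * t) - 1)
  have hA := (integrableOn_div_exp_mul_sub_one_sub_exp_neg_mul_div (inv_pos.2 hα)
    two_pi_pos).const_mul (2 * s ^ 2)⁻¹
  have hB := ((integrableOn_Ioi_comp_mul_left_iff g 0 hc).2
    (by simpa using integrableOn_binetKernel_div_exp_mul_sub_one hα)).const_mul (2 * π / s ^ 2)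
  rw [sqrt_sq hs.le]
  calc _ = s * ((2 * s ^ 2)⁻¹ * (eulerMascheroniConstant + log ((s ^ 2)⁻¹ / (2 * π)))
        - ∫ t in Ioi 0, 2 * π / s ^ 2 * g (2 * π / s ^ 2 * t)) := by
        rw [(hasSum_phi_mul hα).tsum_eq, integral_const_mul, integral_comp_mul_left_Ioi _ _ hc,
          mul_zero, smul_eq_mul, mul_inv_cancel_left₀ hc.ne', log_div (inv_ne_zero hα.ne')
            two_pi_pos.ne', log_inv, log_mul two_pi_pos.ne' hα.ne']
        ring
    _ = ∫ t in Ioi 0, s * ((2 * s ^ 2)⁻¹ * (2 * π / (exp (2 * π * t) - 1)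
        - exp (-((s ^ 2)⁻¹ * t)) / t) - 2 * π / s ^ 2 * g (2 * π / s ^ 2 * t)) := by
        rw [integral_const_mul s, integral_sub hA hB, integral_const_mul (2 * s ^ 2)⁻¹,
          integral_div_exp_mul_sub_one_sub_exp_neg_mul_div (inv_pos.2 hα) two_pi_pos]
    _ = _ := by
        refine setIntegral_congr_fun measurableSet_Ioi fun t (ht : 0 < t) => ?_
        have hE := exp_sub_one_pos (by positivity : 0 < 2 * π * t)
        have hE' := exp_sub_one_pos (by positivity : 0 < 2 * π * t / s ^ 2)
        have hct : 2 * π / s ^ 2 * t = 2 * π * t / s ^ 2 := by ring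
        have hsct : s ^ 2 * (2 * π * t / s ^ 2) = 2 * π * t := by field_simp
        simp only [g, hct, hsct, binetKernel, inv_mul_eq_div]
        field_simp
        ring
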